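/- Let (V,X,d) be a continuity space, let d*(x,y) = d(y,x) be its dual, and let d_∨(x,y) = d(x,y) ⊔ d*(x,y). Then (V,X,d_∨) is a continuity space, and the topology generated by (V,X,d_∨) equals the join (supremum) of the topology generated by (V,X,d) and the topology generated by (V,X,d*). -/

import Mathlib

/-- `y` is well above `x` (written `y ≻ x`): for every `S` with `⨅ S ≤ x`
there is `s ∈ S` with `s ≤ y`. -/
def WellAbove {V : Type*} [CompleteLattice V] (y x : V) : Prop :=
  ∀ S : Set V, sInf S ≤ x → ∃ s ∈ S, s ≤ y

theorem WellAbove.mono {V : Type*} [CompleteLattice V] {a b x : V}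
    (h : WellAbove a x) (hab : a ≤ b) : WellAbove b x := by
  intro S hS
  obtain ⟨s, hs, hsa⟩ := h S hS
  exact ⟨s, hs, hsa.trans hab⟩

/-- A complete lattice `V` together with an addition `add` is a value quantale if it is
completely distributive (expressed via Raney's characterization `y = ⨅ {a | a ≻ y}`),
the set `{a | a ≻ ⊥}` is a filter (nonempty, upward closed, closed under binary meets),
and `add` is associative, commutative, has `⊥` as neutral element and distributes over
arbitrary infima. -/
structure IsValueQuantale (V : Type*) [CompleteLattice V] (add : V → V → V) : Prop where
  raney : ∀ y : V, y = sInf {a | WellAbove a y}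
  wellAbove_bot_nonempty : ∃ a : V, WellAbove a ⊥
  wellAbove_bot_upward : ∀ a b : V, WellAbove a ⊥ → a ≤ b → WellAbove b ⊥
  wellAbove_bot_inf : ∀ a b : V, WellAbove a ⊥ → WellAbove b ⊥ → WellAbove (a ⊓ b) ⊥
  add_assoc : ∀ a b c : V, add (add a b) c = add a (add b c)
  add_comm : ∀ a b : V, add a b = add b a
  add_bot : ∀ a : V, add a ⊥ = a
  add_sInf : ∀ (a : V) (S : Set V), add a (sInf S) = ⨅ s ∈ S, add a s

/-- A value quantale, bundled as a class. -/
class ValueQuantale (V : Type*) extends CompleteLattice V, Add V where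
  isVQ : IsValueQuantale V (· + ·)

/-- `d : X → X → V` is a `V`-space distance (w.r.t. the addition `add`). -/
structure IsVSpaceOn {V : Type*} [CompleteLattice V] (add : V → V → V)
    {X : Type*} (d : X → X → V) : Prop where
  refl : ∀ x, d x x = ⊥
  triangle : ∀ x y z, d x z ≤ add (d x y) (d y z)

/-- The open ball of radius `ε` about `x`: all `y` with `d x y ≺ ε`. -/
def ball {V X : Type*} [CompleteLattice V] (d : X → X → V) (ε : V) (x : X) : Set X :=
  {y | WellAbove ε (d x y)}

/-- `U` is open for the topology generated by a continuity space. -/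
def GenOpen {V X : Type*} [CompleteLattice V] (d : X → X → V) (U : Set X) : Prop :=
  ∀ x ∈ U, ∃ ε : V, WellAbove ε ⊥ ∧ ball d ε x ⊆ U

/-- The topology generated by a continuity space `(V, X, d)`. -/
def genTop {V X : Type*} [ValueQuantale V] (d : X → X → V) : TopologicalSpace X where
  IsOpen := GenOpen d
  isOpen_univ := fun _x _ => by
    obtain ⟨ε, hε⟩ := (ValueQuantale.isVQ (V := V)).wellAbove_bot_nonempty
    exact ⟨ε, hε, Set.subset_univ _⟩
  isOpen_inter := fun U₁ U₂ h₁ h₂ x hx => by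
    obtain ⟨ε₁, hε₁, hb₁⟩ := h₁ x hx.1
    obtain ⟨ε₂, hε₂, hb₂⟩ := h₂ x hx.2
    exact ⟨ε₁ ⊓ ε₂, (ValueQuantale.isVQ (V := V)).wellAbove_bot_inf _ _ hε₁ hε₂,
      fun y hy => ⟨hb₁ (WellAbove.mono hy inf_le_left), hb₂ (WellAbove.mono hy inf_le_right)⟩⟩
  isOpen_sUnion := fun S hS x hx => by
    obtain ⟨U, hU, hxU⟩ := hx
    obtain ⟨ε, hε, hb⟩ := hS U hU x hxU
    exact ⟨ε, hε, hb.trans (Set.subset_sUnion_of_mem hU)⟩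

/-- `Ω S`: the downward-closed families of finite subsets of `S`,
ordered by reverse inclusion. -/
abbrev Omega (S : Type*) := (LowerSet (Finset S))ᵒᵈ

/-- The underlying family of finite subsets of an element of `Ω S`. -/
def Omega.carrier {S : Type*} (A : Omega S) : Set (Finset S) :=
  ((OrderDual.ofDual A : LowerSet (Finset S)) : Set (Finset S))

/-- Construct an element of `Ω S` from a downward-closed family of finite subsets. -/
def Omega.mk {S : Type*} (A : Set (Finset S)) (h : IsLowerSet A) : Omega S :=
  OrderDual.toDual ⟨A, h⟩

/-- Addition on `Ω S`: intersection of the families. -/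
def omegaAdd {S : Type*} (A B : Omega S) : Omega S :=
  Omega.mk (Omega.carrier A ∩ Omega.carrier B)
    ((OrderDual.ofDual A : LowerSet (Finset S)).lower.inter
      (OrderDual.ofDual B : LowerSet (Finset S)).lower)


/-!
Every `d`-ball and every `d*`-ball is open for `d` resp. `d*`: if `d x y ≺ ε`, interpolate
`d x y ≺ b ≺ ε` and write `d x y = ⨅_{δ ≻ ⊥} (d x y + δ)`, which yields `δ ≻ ⊥` with
`d x y + δ ≺ ε`, and the triangle inequality does the rest. Conversely a `d_∨`-ball of radius `ε`
around `x` contains `B_δ(x) ∩ B*_δ(x)` for any `⊥ ≺ δ ≺ ε`, because `d x y ⊔ d y x ≤ δ` on that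
intersection. So the `d_∨`-open sets are exactly the unions of finite intersections of `d`- and
`d*`-open sets.
-/

open Topology

section WellAbove

variable {V : Type*} [CompleteLattice V]

theorem WellAbove.le {a b : V} (h : WellAbove a b) : b ≤ a := by
  obtain ⟨s, hs, hsa⟩ := h {b} sInf_singleton.le
  exact (Set.mem_singleton_iff.mp hs) ▸ hsa

theorem WellAbove.of_le_right {a b c : V} (h : WellAbove a b) (hcb : c ≤ b) :
    WellAbove a c :=
  fun S hS => h S (hS.trans hcb)

theorem WellAbove.exists_between (raney : ∀ y : V, y = sInf {a | WellAbove a y})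
    {a c : V} (h : WellAbove a c) : ∃ b : V, WellAbove a b ∧ WellAbove b c := by
  set S : Set V := {b' | ∃ b, WellAbove b' b ∧ WellAbove b c}
  have hS : sInf S ≤ c := by
    calc sInf S ≤ sInf {b : V | WellAbove b c} := le_sInf fun b hb =>
          calc sInf S ≤ sInf {b' : V | WellAbove b' b} :=
                le_sInf fun b' hb' => sInf_le ⟨b, hb', hb⟩
            _ = b := (raney b).symm
      _ = c := (raney c).symm
  obtain ⟨s, ⟨b, hsb, hbc⟩, hsa⟩ := h S hS
  exact ⟨b, hsb.mono hsa, hbc⟩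

end WellAbove

namespace ValueQuantale

variable {V : Type*} [ValueQuantale V]

theorem add_le_add_left (a : V) {b c : V} (h : b ≤ c) : a + b ≤ a + c := by
  have key := (isVQ (V := V)).add_sInf a {b, c}
  rw [sInf_pair, inf_eq_left.mpr h, iInf_pair] at key
  exact key.le.trans inf_le_right

theorem add_le_add {a b c e : V} (h₁ : a ≤ b) (h₂ : c ≤ e) : a + c ≤ b + e := by
  have hcomm := (isVQ (V := V)).add_comm
  calc a + c ≤ a + e := add_le_add_left a h₂
    _ = e + a := hcomm a e
    _ ≤ e + b := add_le_add_left e h₁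
    _ = b + e := hcomm e b

theorem exists_wellAbove_add {ε p : V} (h : WellAbove ε p) :
    ∃ δ : V, WellAbove δ ⊥ ∧ WellAbove ε (p + δ) := by
  have hq := isVQ (V := V)
  obtain ⟨b, hεb, hbp⟩ := h.exists_between hq.raney
  have hp : sInf ((p + ·) '' {a : V | WellAbove a ⊥}) ≤ p := by
    rw [sInf_image, ← hq.add_sInf, ← hq.raney, hq.add_bot]
  obtain ⟨_, ⟨δ, hδ, rfl⟩, hδb⟩ := hbp _ hp
  exact ⟨δ, hδ, hεb.of_le_right hδb⟩

end ValueQuantale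

section VSpace

variable {V X : Type*}

theorem IsVSpaceOn.dual [ValueQuantale V] {d : X → X → V}
    (hd : IsVSpaceOn (· + · : V → V → V) d) :
    IsVSpaceOn (· + · : V → V → V) (fun x y => d y x) where
  refl := hd.refl
  triangle x y z := (hd.triangle z y x).trans_eq ((ValueQuantale.isVQ).add_comm _ _)

theorem IsVSpaceOn.sup [ValueQuantale V] {d e : X → X → V}
    (hd : IsVSpaceOn (· + · : V → V → V) d) (he : IsVSpaceOn (· + · : V → V → V) e) :
    IsVSpaceOn (· + · : V → V → V) (d ⊔ e) where
  refl x := by simp [hd.refl, he.refl]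
  triangle x y z := sup_le
    ((hd.triangle x y z).trans (ValueQuantale.add_le_add le_sup_left le_sup_left))
    ((he.triangle x y z).trans (ValueQuantale.add_le_add le_sup_right le_sup_right))

theorem mem_ball_self [CompleteLattice V] {d : X → X → V} (hd : ∀ x, d x x = ⊥)
    {ε : V} (hε : WellAbove ε ⊥) (x : X) : x ∈ ball d ε x := by
  simpa [ball, hd x] using hε

theorem GenOpen.of_le [CompleteLattice V] {d e : X → X → V} (hde : d ≤ e) {U : Set X}
    (hU : GenOpen d U) : GenOpen e U := by
  intro x hx
  obtain ⟨ε, hε, hball⟩ := hU x hx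
  exact ⟨ε, hε, fun y hy => hball (WellAbove.of_le_right hy (hde x y))⟩

theorem genOpen_ball [ValueQuantale V] {d : X → X → V}
    (hd : IsVSpaceOn (· + · : V → V → V) d) (ε : V) (x : X) : GenOpen d (ball d ε x) := by
  intro y hy
  obtain ⟨δ, hδ, hεδ⟩ := ValueQuantale.exists_wellAbove_add hy
  refine ⟨δ, hδ, fun z hz => hεδ.of_le_right ?_⟩
  exact (hd.triangle x y z).trans (ValueQuantale.add_le_add_left _ hz.le)

theorem ball_inter_ball_subset_ball_sup [CompleteLattice V] (d e : X → X → V) {ε δ : V}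
    (hεδ : WellAbove ε δ) (x : X) : ball d δ x ∩ ball e δ x ⊆ ball (d ⊔ e) ε x :=
  fun _ hy => hεδ.of_le_right (sup_le hy.1.le hy.2.le)

theorem isOpen_generateFrom_of_genOpen_sup [ValueQuantale V] {d e : X → X → V}
    (hd : IsVSpaceOn (· + · : V → V → V) d) (he : IsVSpaceOn (· + · : V → V → V) e)
    {U : Set X} (hU : GenOpen (d ⊔ e) U) :
    IsOpen[TopologicalSpace.generateFrom {U : Set X | GenOpen d U ∨ GenOpen e U}] U := by
  let _ := TopologicalSpace.generateFrom {U : Set X | GenOpen d U ∨ GenOpen e U}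
  refine isOpen_iff_forall_mem_open.mpr fun x hx => ?_
  obtain ⟨ε, hε, hball⟩ := hU x hx
  obtain ⟨δ, hεδ, hδ⟩ := hε.exists_between (ValueQuantale.isVQ).raney
  refine ⟨ball d δ x ∩ ball e δ x, (ball_inter_ball_subset_ball_sup d e hεδ x).trans hball,
    ?_, mem_ball_self hd.refl hδ x, mem_ball_self he.refl hδ x⟩
  exact (TopologicalSpace.isOpen_generateFrom_of_mem (.inl (genOpen_ball hd δ x))).inter
    (TopologicalSpace.isOpen_generateFrom_of_mem (.inr (genOpen_ball he δ x)))

end VSpace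

/-- for a continuity space `(V,X,d)` with dual `d*(x,y) = d(y,x)`, the
symmetrisation `d∨(x,y) = d(x,y) ⊔ d*(x,y)` is again a `V`-space distance, and the
topology it generates is the join of the topologies generated by `d` and by `d*`,
i.e. the topology generated from the union of their open sets. -/
theorem sup_symmetrisation {V X : Type*} [ValueQuantale V] (d : X → X → V)
    (hd : IsVSpaceOn (· + · : V → V → V) d) :
    IsVSpaceOn (· + · : V → V → V) (fun x y => d x y ⊔ d y x) ∧
    genTop (fun x y => d x y ⊔ d y x) =
      TopologicalSpace.generateFrom
        {U : Set X | GenOpen d U ∨ GenOpen (fun x y => d y x) U} := by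
  have hsup : (fun x y => d x y ⊔ d y x) = d ⊔ fun x y => d y x := rfl
  refine ⟨hsup ▸ hd.sup hd.dual, le_antisymm ?_ fun U hU => ?_⟩
  · exact le_generateFrom fun U hU =>
      hU.elim (·.of_le fun _ _ => le_sup_left) (·.of_le fun _ _ => le_sup_right)
  · exact isOpen_generateFrom_of_genOpen_sup hd hd.dual hU
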